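/- arXiv:1807.02213 — 4 statements merged into one kernel-verified Lean document; each statement's English description precedes it below -/
import Mathlib

section
/- If a set of reals A ⊆ ω^ω contains a perfect subset (equivalently, there is a continuous injection f : 2^ω → ω^ω with range contained in A), then there is no wellordering of A that, pulled back under f × f, has the Baire property as a subset of 2^ω × 2^ω; consequently a set of reals admitting a wellordering with the Baire property (in the product topology) and containing a perfect subset yields a contradiction. In particular, there is no wellordering of the Cantor space 2^ω whose order relation, as a subset of 2^ω × 2^ω, has the property of Baire. -/
/-!
If the graph `S` of a wellordering `≺` of a perfect Hausdorff second countable Baire space has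
the property of Baire, then inside every nonempty open set `U` there is a box `A × B` of nonempty
open sets in which `S` is comeager: split `U` into disjoint open `U₁`, `U₂`; either `S` is
comeager in a box inside `U₁ × U₂`, or `S` is meager in `U₁ × U₂` and then, the order being
linear, comeager in `U₂ × U₁`. By Kuratowski–Ulam, comeager many `z ∈ B` then lie above comeager
many points of `A`. So if `z` is `≺`-least among the points lying above comeager many points of
some nonempty open `A`, the same argument inside `A` yields such a point `z' ≺ z`, a
contradiction. For a set of reals, pull the wellordering back along the injection of Cantor space
into it.
-/

open Set Filter Topology TopologicalSpace

section KuratowskiUlam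

variable {X Y : Type*} [TopologicalSpace X] [TopologicalSpace Y]

theorem Dense.eventually_dense_preimage_prodMk_right [SecondCountableTopology Y]
    {W : Set (X × Y)} (hW : Dense W) (hWo : IsOpen W) :
    ∀ᶠ x in residual X, Dense ((fun y => (x, y)) ⁻¹' W) := by
  have hproj : ∀ V ∈ countableBasis Y, ∀ᶠ x in residual X, ∃ y ∈ V, (x, y) ∈ W := by
    intro V hV
    have hVo := isOpen_of_mem_countableBasis hV
    have hopen : IsOpen (Prod.fst '' (W ∩ univ ×ˢ V)) :=
      isOpenMap_fst _ (hWo.inter (isOpen_univ.prod hVo))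
    have hdense : Dense (Prod.fst '' (W ∩ univ ×ˢ V)) := by
      refine dense_iff_inter_open.2 fun U hU hUne => ?_
      obtain ⟨⟨x, y⟩, ⟨hx, hy⟩, hxy⟩ := hW.inter_open_nonempty _ (hU.prod hVo)
        (hUne.prod (nonempty_of_mem_countableBasis hV))
      exact ⟨x, hx, (x, y), ⟨hxy, trivial, hy⟩, rfl⟩
    filter_upwards [residual_of_dense_open hopen hdense] with x ⟨⟨_, y⟩, ⟨hxy, _, hy⟩, rfl⟩
    exact ⟨y, hy, hxy⟩
  filter_upwards [(eventually_countable_ball (countable_countableBasis Y)).2 hproj] with x hx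
  exact (isBasis_countableBasis Y).dense_iff.2 fun V hV _ => hx V hV

theorem IsMeagre.eventually_isMeagre_preimage_prodMk_right [SecondCountableTopology Y]
    {M : Set (X × Y)} (hM : IsMeagre M) :
    ∀ᶠ x in residual X, IsMeagre ((fun y => (x, y)) ⁻¹' M) := by
  obtain ⟨S, hSo, hSd, hSc, hSM⟩ := mem_residual_iff.1 hM
  filter_upwards [(eventually_countable_ball hSc).2 fun W hW =>
    (hSd W hW).eventually_dense_preimage_prodMk_right (hSo W hW)] with x hx
  refine mem_of_superset ((countable_bInter_mem hSc).2 fun W hW =>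
    residual_of_dense_open ((hSo W hW).preimage (Continuous.prodMk_right x)) (hx W hW)) ?_
  exact fun y hy => hSM (mem_sInter.2 fun W hW => mem_iInter₂.1 hy W hW)

theorem IsMeagre.eventually_isMeagre_preimage_prodMk_left [SecondCountableTopology X]
    {M : Set (X × Y)} (hM : IsMeagre M) :
    ∀ᶠ y in residual Y, IsMeagre ((fun x => (x, y)) ⁻¹' M) :=
  (hM.preimage_of_isOpenMap continuous_swap (Homeomorph.prodComm Y X).isOpenMap)
    |>.eventually_isMeagre_preimage_prodMk_right

end KuratowskiUlam

section BaireProperty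

variable {X Y : Type*} [TopologicalSpace X] [TopologicalSpace Y]

theorem BaireMeasurableSet.isMeagre_inter_prod_or_exists_isMeagre_prod_diff
    {S : Set (X × Y)} (hS : BaireMeasurableSet S) {U : Set X} {V : Set Y}
    (hU : IsOpen U) (hV : IsOpen V) :
    IsMeagre (S ∩ U ×ˢ V) ∨ ∃ A ⊆ U, ∃ B ⊆ V, IsOpen A ∧ IsOpen B ∧ A.Nonempty ∧ B.Nonempty ∧
      IsMeagre (A ×ˢ B \ S) := by
  obtain ⟨O, hO, hSO⟩ := hS.residualEq_isOpen
  have hSO' := eventuallyEq_set.1 hSO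
  by_cases hmeets : (O ∩ U ×ˢ V).Nonempty
  · obtain ⟨⟨x, y⟩, hxyO, hx, hy⟩ := hmeets
    obtain ⟨A, B, hA, hB, hxA, hyB, hAB⟩ := isOpen_prod_iff.1 hO x y hxyO
    refine .inr ⟨A ∩ U, inter_subset_right, B ∩ V, inter_subset_right, hA.inter hU,
      hB.inter hV, ⟨x, hxA, hx⟩, ⟨y, hyB, hy⟩, ?_⟩
    filter_upwards [hSO'] with p hp ⟨⟨⟨hp1, _⟩, hp2, _⟩, hpS⟩
    exact hpS (hp.2 (hAB ⟨hp1, hp2⟩))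
  · refine .inl ?_
    filter_upwards [hSO'] with p hp ⟨hpS, hpUV⟩
    exact hmeets ⟨p, hp.1 hpS, hpUV⟩

theorem exists_mem_inter_isMeagre_diff_preimage_prodMk_left [SecondCountableTopology X]
    [BaireSpace Y] {S : Set (X × Y)} {A : Set X} {B T : Set Y} (hB : IsOpen B)
    (hBne : B.Nonempty) (hAB : IsMeagre (A ×ˢ B \ S)) (hT : IsMeagre (B \ T)) :
    ∃ y ∈ B ∩ T, IsMeagre (A \ (fun x => (x, y)) ⁻¹' S) := by
  obtain ⟨y, hyB, hyAB, hyT⟩ := (dense_of_mem_residual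
    (inter_mem hAB.eventually_isMeagre_preimage_prodMk_left hT)).inter_open_nonempty B hB hBne
  refine ⟨y, ⟨hyB, by_contra fun hyT' => hyT ⟨hyB, hyT'⟩⟩, hyAB.mono ?_⟩
  exact fun x ⟨hxA, hxS⟩ => ⟨⟨hxA, hyB⟩, hxS⟩

end BaireProperty

theorem IsOpen.exists_disjoint_nonempty_open_subsets {X : Type*} [TopologicalSpace X]
    [T2Space X] [PerfectSpace X] {U : Set X} (hU : IsOpen U) (hne : U.Nonempty) :
    ∃ U₁ ⊆ U, ∃ U₂ ⊆ U, IsOpen U₁ ∧ IsOpen U₂ ∧ U₁.Nonempty ∧ U₂.Nonempty ∧ Disjoint U₁ U₂ := by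
  obtain ⟨x, hx⟩ := hne
  obtain ⟨y, ⟨-, hy⟩, hyx⟩ := preperfect_iff_nhds.1 hU.preperfect x hx univ univ_mem
  obtain ⟨V₁, V₂, hV₁, hV₂, hxV₁, hyV₂, hV⟩ := t2_separation hyx.symm
  exact ⟨U ∩ V₁, inter_subset_left, U ∩ V₂, inter_subset_left, hU.inter hV₁, hU.inter hV₂,
    ⟨x, hx, hxV₁⟩, ⟨y, hy, hyV₂⟩, hV.mono inter_subset_right inter_subset_right⟩

instance Pi.perfectSpace {ι : Type*} [Infinite ι] {π : ι → Type*}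
    [∀ i, TopologicalSpace (π i)] [∀ i, Nontrivial (π i)] : PerfectSpace (∀ i, π i) := by
  classical
  refine perfectSpace_iff_forall_not_isolated.2 fun x => ?_
  choose y hy using fun i => exists_ne (x i)
  have hlim : Tendsto (fun i => Function.update x i (y i)) cofinite (𝓝[≠] x) := by
    refine tendsto_nhdsWithin_iff.2 ⟨tendsto_pi_nhds.2 fun j => ?_, .of_forall fun i h => ?_⟩
    · refine tendsto_const_nhds.congr' ((eventually_cofinite_ne j).mono fun i hij => ?_)
      exact (Function.update_of_ne hij.symm _ _).symm
    · exact hy i (by simpa using congrFun h i)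
  exact hlim.neBot

section WellOrder

variable {X : Type*} [TopologicalSpace X] [T2Space X] [PerfectSpace X] (s : X → X → Prop)

theorem exists_open_prod_subset_isMeagre_diff_setOf [Std.Trichotomous s]
    (hs : BaireMeasurableSet {p : X × X | s p.1 p.2}) {U : Set X} (hU : IsOpen U)
    (hne : U.Nonempty) :
    ∃ A ⊆ U, ∃ B ⊆ U, IsOpen A ∧ IsOpen B ∧ A.Nonempty ∧ B.Nonempty ∧
      IsMeagre (A ×ˢ B \ {p : X × X | s p.1 p.2}) := by
  obtain ⟨U₁, hU₁, U₂, hU₂, hU₁o, hU₂o, hU₁ne, hU₂ne, hdisj⟩ :=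
    hU.exists_disjoint_nonempty_open_subsets hne
  rcases hs.isMeagre_inter_prod_or_exists_isMeagre_prod_diff hU₁o hU₂o with
    hmeagre | ⟨A, hA, B, hB, hbox⟩
  · refine ⟨U₂, hU₂, U₁, hU₁, hU₂o, hU₁o, hU₂ne, hU₁ne, ?_⟩
    refine (hmeagre.preimage_of_isOpenMap continuous_swap
      (Homeomorph.prodComm X X).isOpenMap).mono ?_
    -- `U₁` and `U₂` are disjoint, so `s y x` fails only if `s x y` holds
    rintro ⟨y, x⟩ ⟨⟨hy, hx⟩, hyx⟩
    refine ⟨(trichotomous_of s x y).resolve_right fun h => ?_, hx, hy⟩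
    exact h.elim (fun hxy => hdisj.ne_of_mem hx hy hxy) hyx
  · exact ⟨A, hA.trans hU₁, B, hB.trans hU₂, hbox⟩

variable [SecondCountableTopology X] [BaireSpace X]

theorem not_baireMeasurableSet_setOf_of_isWellOrder [Nonempty X] [IsWellOrder X s] :
    ¬ BaireMeasurableSet {p : X × X | s p.1 p.2} := by
  intro hs
  let G := {z | ∃ A, IsOpen A ∧ A.Nonempty ∧ IsMeagre (A \ {w | s w z})}
  have hG : ∀ U, IsOpen U → U.Nonempty → ∀ T, IsMeagre (U \ T) → (T ∩ G).Nonempty := by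
    intro U hU hne T hT
    obtain ⟨A, -, B, hBU, hA, hB, hAne, hBne, hAB⟩ :=
      exists_open_prod_subset_isMeagre_diff_setOf s hs hU hne
    obtain ⟨z, ⟨-, hzT⟩, hz⟩ := exists_mem_inter_isMeagre_diff_preimage_prodMk_left hB hBne hAB
      (hT.mono (sdiff_subset_sdiff_left hBU))
    exact ⟨z, hzT, A, hA, hAne, hz⟩
  obtain ⟨m, ⟨A, hA, hAne, hm⟩, hmin⟩ := (IsWellFounded.wf (r := s)).has_min G
    ((hG univ isOpen_univ univ_nonempty univ (by simp [IsMeagre.empty])).mono inter_subset_right)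
  obtain ⟨z, hzm, hzG⟩ := hG A hA hAne {w | s w m} hm
  exact hmin z hzG hzm

end WellOrder

/-- A set has the property of Baire iff it differs from an open set by a meager set;
this is `BaireMeasurableSet` in Mathlib. A wellordering of a set of reals pulled back
under a continuous injection of Cantor space into the set never has the property of
Baire; in particular there is no wellordering of Cantor space whose order relation has
the property of Baire. -/
theorem stmt_0 :
    (∀ (A : Set (ℕ → ℕ)) (f : (ℕ → Bool) → (ℕ → ℕ)),
      Continuous f → Function.Injective f → ∀ (hran : ∀ y, f y ∈ A),
      ∀ r : A → A → Prop, IsWellOrder A r →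
      ¬ BaireMeasurableSet {p : (ℕ → Bool) × (ℕ → Bool) |
          r ⟨f p.1, hran p.1⟩ ⟨f p.2, hran p.2⟩}) ∧
    (∀ s : (ℕ → Bool) → (ℕ → Bool) → Prop, IsWellOrder (ℕ → Bool) s →
      ¬ BaireMeasurableSet {p : (ℕ → Bool) × (ℕ → Bool) | s p.1 p.2}) := by
  refine ⟨fun A f _ hinj hran r _ => ?_, fun s _ => not_baireMeasurableSet_setOf_of_isWellOrder s⟩
  let e : (ℕ → Bool) ↪ A := ⟨fun x => ⟨f x, hran x⟩, fun x y h => hinj (congrArg Subtype.val h)⟩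
  have := (RelEmbedding.preimage e r).isWellOrder
  exact not_baireMeasurableSet_setOf_of_isWellOrder (e ⁻¹'o r)
end

section
/- Suppose κ is a cardinal such that for every function f : κ → κ there exist an ordinal λ > κ, a transitive set M with V_λ ⊆ M, and an elementary embedding j : V_λ → M (existing possibly in a forcing extension, but for this statement assume j exists in V) with critical point κ. Then κ is ineffable: for every sequence ⟨A_α : α < κ⟩ with A_α ⊆ α for all α < κ, there is a set A ⊆ κ such that { α < κ : A ∩ α = A_α } is stationary in κ. -/
open FirstOrder

/-- The language of set theory: one binary relation `∈`. -/
inductive memRelSym : ℕ → Type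
  | mem : memRelSym 2

/-- The language of set theory. -/
def memLang : Language := ⟨fun _ => Empty, memRelSym⟩

/-- Any class of sets (subclass of the von Neumann universe, here modelled by `ZFSet`)
is a structure in the language of set theory, interpreted by true membership. -/
instance memStructure (S : Set ZFSet) : memLang.Structure S where
  funMap := fun e _ => e.elim
  RelMap := fun r x => match r with
    | memRelSym.mem => ((x 0) : ZFSet) ∈ ((x 1) : ZFSet)

/-- The rank initial segment `V_λ` of the universe, as a class of `ZFSet`s. -/
def Vo (l : Ordinal) : Set ZFSet := {x | x.rank < l}

/-- `C` is club in an ordinal `κ`: unbounded in `κ` and closed under limits below `κ`. -/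
def IsClubIn (C : Set Ordinal) (k : Ordinal) : Prop :=
  (∀ a < k, ∃ b ∈ C, a ≤ b ∧ b < k) ∧
  (∀ a < k, 0 < a → (∀ b < a, ∃ c ∈ C, b ≤ c ∧ c < a) → a ∈ C)

/-- `S` is stationary in `κ`: it meets every club subset of `κ`. -/
def IsStationaryIn (S : Set Ordinal) (k : Ordinal) : Prop :=
  ∀ C : Set Ordinal, IsClubIn C k → (S ∩ C).Nonempty

/-!
Let `j : V_λ → M` have critical point `κ`. If `κ = a + 1`, every club in `κ` contains `a`, so
`S = A a` works. Otherwise `κ` is a limit and the sequence is coded by the set `Â ∈ V_λ` of the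
sets `A α ∪ {α}`. As `κ ∈ j(κ)`, `j(Â)` has an entry with largest element `κ`; let `S` be its
part below `κ`. Given a club `C`, closure of `j(C)` gives `κ ∈ j(C)`, and `j(S) ∩ κ = S`, so in
`M` some `α ∈ j(C) ∩ j(κ)` has `j(Â)`-entry `j(S) ∩ α`. By elementarity the same holds in `V_λ`,
giving `α ∈ C` with `S ∩ α = A α`. Each property moved along `j` is expressed by a first-order
formula whose meaning is the same in every transitive class.
-/

open FirstOrder Language BoundedFormula Order Ordinal ZFSet

universe u

def IsTransitiveClass (S : Set ZFSet.{u}) : Prop := ∀ x ∈ S, ∀ y ∈ x, y ∈ S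

theorem isTransitiveClass_Vo (l : Ordinal.{u}) : IsTransitiveClass (Vo l) :=
  fun _ hx _ hy => (rank_lt_of_mem hy).trans hx

theorem ZFSet.IsTransitive.isTransitiveClass {M : ZFSet.{u}} (hM : M.IsTransitive) :
    IsTransitiveClass M.toSet :=
  fun _ hx _ hy => hM.mem_trans hy hx

theorem toZFSet_mem_Vo {a l : Ordinal.{u}} (h : a < l) : a.toZFSet ∈ Vo l :=
  (rank_toZFSet a).trans_lt h

def memF {α : Type} {n : ℕ} (t₁ t₂ : memLang.Term (α ⊕ Fin n)) : memLang.BoundedFormula α n :=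
  Relations.boundedFormula₂ memRelSym.mem t₁ t₂

def fv {α : Type} {n : ℕ} (i : α) : memLang.Term (α ⊕ Fin n) := Term.var (Sum.inl i)

@[simp] theorem realize_memF {S : Set ZFSet.{u}} {α : Type} {n : ℕ}
    {t₁ t₂ : memLang.Term (α ⊕ Fin n)} {v : α → S} {xs : Fin n → S} :
    (memF t₁ t₂).Realize v xs ↔
      ((t₁.realize (Sum.elim v xs) : S) : ZFSet) ∈ ((t₂.realize (Sum.elim v xs) : S) : ZFSet) :=
  realize_rel₂

def Expresses {n : ℕ} (φ : memLang.Formula (Fin n)) (P : (Fin n → ZFSet.{u}) → Prop) : Prop :=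
  ∀ S : Set ZFSet.{u}, IsTransitiveClass S → ∀ v : Fin n → S, φ.Realize v ↔ P fun i => v i

def IsLargestMem (a x : ZFSet) : Prop := a ∈ x ∧ ∀ z ∈ x, z ∈ a ∨ z = a

def HasEntries (sq k : ZFSet) : Prop := ∀ a ∈ k, ∃ x ∈ sq, IsLargestMem a x

def IsClosedIn (c k : ZFSet) : Prop :=
  ∀ a ∈ k, a ≠ ∅ → (∀ b ∈ a, ∃ e ∈ c, e ∈ a ∧ b ⊆ e) → a ∈ c

def ExistsGuess (c sq s k : ZFSet) : Prop :=
  ∃ a ∈ k, a ∈ c ∧ ∃ x ∈ sq, IsLargestMem a x ∧ ∀ z ∈ a, (z ∈ x ↔ z ∈ s)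

def memFm : memLang.Formula (Fin 2) := memF (fv 0) (fv 1)

def nonemptyFm : memLang.Formula (Fin 1) := ∃' memF &0 (fv 0)

def ordinalFm : memLang.Formula (Fin 1) :=
  (∀' (memF &0 (fv 0) ⟹ ∀' (memF &1 &0 ⟹ memF &1 (fv 0)))) ⊓
  (∀' (memF &0 (fv 0) ⟹ ∀' (memF &1 &0 ⟹ ∀' (memF &2 &1 ⟹ memF &2 &0))))

def entriesFm : memLang.Formula (Fin 2) :=
  ∀' (memF &0 (fv 1) ⟹
    ∃' (memF &1 (fv 0) ⊓ memF &0 &1 ⊓ ∀' (memF &2 &1 ⟹ (memF &2 &0 ⊔ (&2 =' &0)))))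

def closedFm : memLang.Formula (Fin 2) :=
  ∀' (memF &0 (fv 1) ⟹ (∃' memF &1 &0) ⟹
    (∀' (memF &1 &0 ⟹ ∃' (memF &2 (fv 0) ⊓ memF &2 &0 ⊓ ∀' (memF &3 &1 ⟹ memF &3 &2)))) ⟹
    memF &0 (fv 0))

def guessFm : memLang.Formula (Fin 4) :=
  ∃' (memF &0 (fv 3) ⊓ memF &0 (fv 0) ⊓ ∃' (memF &1 (fv 1) ⊓ memF &0 &1 ⊓
    ∀' (memF &2 &1 ⟹ (memF &2 &0 ⊔ (&2 =' &0))) ⊓ ∀' (memF &2 &0 ⟹ (memF &2 &1 ⇔ memF &2 (fv 2)))))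

theorem expresses_memFm : Expresses memFm fun v => v 0 ∈ v 1 := by
  intro S _ v
  simp [memFm, Formula.Realize, fv]

theorem expresses_nonemptyFm : Expresses nonemptyFm fun v => v 0 ≠ ∅ := by
  intro S hS v
  simp [nonemptyFm, Formula.Realize, fv, Fin.snoc, eq_empty]
  grind [IsTransitiveClass]

theorem expresses_ordinalFm : Expresses ordinalFm fun v => (v 0).IsOrdinal := by
  intro S hS v
  have h : ordinalFm.Realize v ↔ (v 0 : ZFSet).IsTransitive ∧
      ∀ {y z w : ZFSet}, y ∈ z → z ∈ w → w ∈ (v 0 : ZFSet) → y ∈ w := by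
    simp [ordinalFm, Formula.Realize, fv, Fin.snoc, ZFSet.IsTransitive, subset_def]
    grind [IsTransitiveClass]
  exact h.trans ⟨fun h => ⟨h.1, h.2⟩, fun h => ⟨h.1, h.2⟩⟩

theorem expresses_entriesFm : Expresses entriesFm fun v => HasEntries (v 0) (v 1) := by
  intro S hS v
  simp [entriesFm, Formula.Realize, fv, Fin.snoc, HasEntries, IsLargestMem]
  grind [IsTransitiveClass]

theorem expresses_closedFm : Expresses closedFm fun v => IsClosedIn (v 0) (v 1) := by
  intro S hS v
  simp [closedFm, Formula.Realize, fv, Fin.snoc, IsClosedIn, eq_empty, subset_def]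
  grind [IsTransitiveClass]

theorem expresses_guessFm : Expresses guessFm fun v => ExistsGuess (v 0) (v 1) (v 2) (v 3) := by
  intro S hS v
  simp [guessFm, Formula.Realize, fv, Fin.snoc, ExistsGuess, IsLargestMem]
  grind [IsTransitiveClass]

section Codes

variable {A : Ordinal.{u} → Set Ordinal.{u}} {T : Set Ordinal.{u}} {a b k : Ordinal.{u}}

noncomputable def ordCode (T : Set Ordinal.{u}) (k : Ordinal.{u}) : ZFSet.{u} :=
  ZFSet.sep (fun x => x.rank ∈ T) k.toZFSet

theorem toZFSet_mem_ordCode : b.toZFSet ∈ ordCode T k ↔ b < k ∧ b ∈ T := by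
  rw [ordCode, mem_sep, toZFSet_mem_toZFSet_iff, rank_toZFSet]

theorem mem_ordCode {x : ZFSet.{u}} : x ∈ ordCode T k ↔ ∃ b < k, b ∈ T ∧ b.toZFSet = x := by
  constructor
  · intro hx
    obtain ⟨b, hb, rfl⟩ := mem_toZFSet_iff.1 (sep_subset hx)
    exact ⟨b, hb, (toZFSet_mem_ordCode.1 hx).2, rfl⟩
  · rintro ⟨b, hb, hbT, rfl⟩
    exact toZFSet_mem_ordCode.2 ⟨hb, hbT⟩

theorem rank_ordCode_le : (ordCode T k).rank ≤ k :=
  (rank_mono sep_subset).trans (rank_toZFSet k).le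

/-- `A a ∪ {a}`: both `a` (its largest element) and `A a` can be read off this code. -/
noncomputable def seqEntry (A : Ordinal.{u} → Set Ordinal.{u}) (a : Ordinal.{u}) : ZFSet.{u} :=
  ordCode (insert a (A a)) (succ a)

noncomputable def seqCode (A : Ordinal.{u} → Set Ordinal.{u}) (k : Ordinal.{u}) : ZFSet.{u} :=
  ZFSet.range fun a : Set.Iio k => seqEntry A a

theorem mem_seqCode {x : ZFSet.{u}} : x ∈ seqCode A k ↔ ∃ a < k, seqEntry A a = x := by
  simp [seqCode, mem_range]

theorem toZFSet_mem_seqEntry (h : b < a) : b.toZFSet ∈ seqEntry A a ↔ b ∈ A a := by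
  simp [seqEntry, toZFSet_mem_ordCode, h.le, h.ne]

theorem isLargestMem_toZFSet_seqEntry_iff :
    IsLargestMem b.toZFSet (seqEntry A a) ↔ b = a := by
  constructor
  · rintro ⟨hb, hmax⟩
    have hba : b ≤ a := lt_succ_iff.1 (toZFSet_mem_ordCode.1 hb).1
    have hab : a ≤ b := by
      rcases hmax _ (toZFSet_mem_ordCode.2 ⟨lt_succ a, Set.mem_insert a _⟩) with h | h
      · exact (toZFSet_mem_toZFSet_iff.1 h).le
      · exact (toZFSet_injective h).le
    exact hba.antisymm hab
  · rintro rfl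
    refine ⟨toZFSet_mem_ordCode.2 ⟨lt_succ b, Set.mem_insert b _⟩, fun z hz => ?_⟩
    obtain ⟨c, hc, -, rfl⟩ := mem_ordCode.1 hz
    rcases (lt_succ_iff.1 hc).lt_or_eq with h | rfl
    · exact Or.inl (toZFSet_mem_toZFSet_iff.2 h)
    · exact Or.inr rfl

theorem rank_seqCode_le (hk : IsSuccLimit k) : (seqCode A k).rank ≤ k := by
  rw [rank_le_iff]
  intro x hx
  obtain ⟨a, ha, rfl⟩ := mem_seqCode.1 hx
  exact rank_ordCode_le.trans_lt (hk.succ_lt ha)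

theorem hasEntries_seqCode : HasEntries (seqCode A k) k.toZFSet := by
  intro x hx
  obtain ⟨a, ha, rfl⟩ := mem_toZFSet_iff.1 hx
  exact ⟨seqEntry A a, mem_seqCode.2 ⟨a, ha, rfl⟩, isLargestMem_toZFSet_seqEntry_iff.2 rfl⟩

theorem isClosedIn_ordCode {C : Set Ordinal.{u}} (hC : IsClubIn C k) :
    IsClosedIn (ordCode C k) k.toZFSet := by
  intro x hx hx0 hcof
  obtain ⟨a, ha, rfl⟩ := mem_toZFSet_iff.1 hx
  refine toZFSet_mem_ordCode.2 ⟨ha, hC.2 a ha ?_ fun b hb => ?_⟩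
  · exact pos_iff_ne_zero.2 fun h => hx0 (by rw [h, toZFSet_zero])
  · obtain ⟨e, he, hea, hbe⟩ := hcof _ (toZFSet_mem_toZFSet_iff.2 hb)
    obtain ⟨c, -, hcC, rfl⟩ := mem_ordCode.1 he
    exact ⟨c, hcC, toZFSet_subset_toZFSet_iff.1 hbe, toZFSet_mem_toZFSet_iff.1 hea⟩

theorem nonempty_inter_of_existsGuess {C S : Set Ordinal.{u}} (hA : ∀ a < k, A a ⊆ Set.Iio a)
    (h : ExistsGuess (ordCode C k) (seqCode A k) (ordCode S k) k.toZFSet) :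
    ({a | a < k ∧ S ∩ Set.Iio a = A a} ∩ C).Nonempty := by
  obtain ⟨x, hx, hxC, y, hy, hmax, hguess⟩ := h
  obtain ⟨a, ha, rfl⟩ := mem_toZFSet_iff.1 hx
  obtain ⟨a', -, rfl⟩ := mem_seqCode.1 hy
  obtain rfl := isLargestMem_toZFSet_seqEntry_iff.1 hmax
  have hguess' : ∀ b < a, b ∈ A a ↔ b ∈ S := fun b hb => by
    rw [← toZFSet_mem_seqEntry hb, hguess _ (toZFSet_mem_toZFSet_iff.2 hb), toZFSet_mem_ordCode,
      and_iff_right (hb.trans ha)]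
  refine ⟨a, ⟨ha, Set.ext fun b => ?_⟩, (toZFSet_mem_ordCode.1 hxC).2⟩
  exact ⟨fun ⟨hbS, hba⟩ => (hguess' b hba).2 hbS,
    fun hb => ⟨(hguess' b (hA a ha hb)).1 hb, hA a ha hb⟩⟩

end Codes

theorem ordCode_mem_Vo {T : Set Ordinal.{u}} {k l : Ordinal.{u}} (h : k < l) : ordCode T k ∈ Vo l :=
  rank_ordCode_le.trans_lt h

theorem Expresses.map_iff {l : Ordinal.{u}} {M : ZFSet.{u}} {n : ℕ} {φ : memLang.Formula (Fin n)}
    {P : (Fin n → ZFSet.{u}) → Prop} (h : Expresses φ P) (j : Vo l ↪ₑ[memLang] M.toSet)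
    (hM : M.IsTransitive) (v : Fin n → Vo l) : (P fun i => j (v i)) ↔ P fun i => v i := by
  rw [← h _ hM.isTransitiveClass, ← h _ (isTransitiveClass_Vo l)]
  exact j.map_formula φ v

structure IsCritical {l : Ordinal.{u}} {M : ZFSet.{u}} (j : Vo l ↪ₑ[memLang] M.toSet)
    (κ : Ordinal.{u}) : Prop where
  lt : κ < l
  map_toZFSet_of_lt : ∀ b < κ, ∀ hb : b.toZFSet ∈ Vo l, (j ⟨_, hb⟩ : ZFSet) = b.toZFSet
  map_toZFSet_ne : (j ⟨_, toZFSet_mem_Vo lt⟩ : ZFSet) ≠ κ.toZFSet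

namespace IsCritical

variable {l κ : Ordinal.{u}} {M : ZFSet.{u}} {j : Vo l ↪ₑ[memLang] M.toSet}

theorem toZFSet_mem_map_iff (hj : IsCritical j κ) (hM : M.IsTransitive) {b : Ordinal.{u}}
    (hb : b < κ) (x : Vo l) : b.toZFSet ∈ (j x : ZFSet) ↔ b.toZFSet ∈ (x : ZFSet) := by
  have hbV : b.toZFSet ∈ Vo l := toZFSet_mem_Vo (hb.trans hj.lt)
  have h : (j ⟨_, hbV⟩ : ZFSet) ∈ (j x : ZFSet) ↔ b.toZFSet ∈ (x : ZFSet) :=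
    expresses_memFm.map_iff j hM ![⟨_, hbV⟩, x]
  rwa [hj.map_toZFSet_of_lt b hb] at h

theorem ne_zero (hj : IsCritical j κ) (hM : M.IsTransitive) : κ ≠ 0 := by
  intro h0
  have hκ : κ.toZFSet = ∅ := by rw [h0, toZFSet_zero]
  have h : (j ⟨_, toZFSet_mem_Vo hj.lt⟩ : ZFSet) ≠ ∅ ↔ κ.toZFSet ≠ ∅ :=
    expresses_nonemptyFm.map_iff j hM ![⟨_, toZFSet_mem_Vo hj.lt⟩]
  have hj0 : (j ⟨_, toZFSet_mem_Vo hj.lt⟩ : ZFSet) = ∅ := not_not.1 fun h' => h.1 h' hκ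
  exact hj.map_toZFSet_ne (hj0.trans hκ.symm)

theorem toZFSet_mem_map_self (hj : IsCritical j κ) (hM : M.IsTransitive) :
    κ.toZFSet ∈ (j ⟨_, toZFSet_mem_Vo hj.lt⟩ : ZFSet) := by
  have hord : (j ⟨_, toZFSet_mem_Vo hj.lt⟩ : ZFSet).IsOrdinal :=
    (expresses_ordinalFm.map_iff j hM ![⟨_, toZFSet_mem_Vo hj.lt⟩]).2 (isOrdinal_toZFSet κ)
  have hsub : κ.toZFSet ⊆ (j ⟨_, toZFSet_mem_Vo hj.lt⟩ : ZFSet) := fun z hz => by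
    obtain ⟨b, hb, rfl⟩ := mem_toZFSet_iff.1 hz
    exact (hj.toZFSet_mem_map_iff hM hb _).2 hz
  exact (((isOrdinal_toZFSet κ).subset_iff_eq_or_mem hord).1 hsub).resolve_left
    hj.map_toZFSet_ne.symm

theorem toZFSet_mem_map_ordCode (hj : IsCritical j κ) (hM : M.IsTransitive) {C : Set Ordinal.{u}}
    (hC : IsClubIn C κ) : κ.toZFSet ∈ (j ⟨_, ordCode_mem_Vo (T := C) hj.lt⟩ : ZFSet) := by
  have hclosed : IsClosedIn (j ⟨_, ordCode_mem_Vo (T := C) hj.lt⟩) (j ⟨_, toZFSet_mem_Vo hj.lt⟩) :=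
    (expresses_closedFm.map_iff j hM ![⟨_, ordCode_mem_Vo hj.lt⟩, ⟨_, toZFSet_mem_Vo hj.lt⟩]).2
      (isClosedIn_ordCode hC)
  have hκ0 : κ.toZFSet ≠ ∅ := by
    rw [← toZFSet_zero]
    exact toZFSet_injective.ne (hj.ne_zero hM)
  refine hclosed _ (hj.toZFSet_mem_map_self hM) hκ0 fun x hx => ?_
  obtain ⟨b, hb, rfl⟩ := mem_toZFSet_iff.1 hx
  obtain ⟨c, hcC, hbc, hc⟩ := hC.1 b hb
  exact ⟨c.toZFSet, (hj.toZFSet_mem_map_iff hM hc _).2 (toZFSet_mem_ordCode.2 ⟨hc, hcC⟩),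
    toZFSet_mem_toZFSet_iff.2 hc, toZFSet_subset_toZFSet_iff.2 hbc⟩

theorem exists_isStationaryIn (hj : IsCritical j κ) (hM : M.IsTransitive) (hκ : IsSuccLimit κ)
    {A : Ordinal.{u} → Set Ordinal.{u}} (hA : ∀ a < κ, A a ⊆ Set.Iio a) :
    ∃ S ⊆ Set.Iio κ, IsStationaryIn {a | a < κ ∧ S ∩ Set.Iio a = A a} κ := by
  set K : Vo l := ⟨_, toZFSet_mem_Vo hj.lt⟩
  set Â : Vo l := ⟨_, (rank_seqCode_le (A := A) hκ).trans_lt hj.lt⟩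
  obtain ⟨x, hx, hmax⟩ : ∃ x ∈ (j Â : ZFSet), IsLargestMem κ.toZFSet x :=
    (expresses_entriesFm.map_iff j hM ![Â, K]).2 hasEntries_seqCode _ (hj.toZFSet_mem_map_self hM)
  refine ⟨{b | b < κ ∧ b.toZFSet ∈ x}, fun b hb => hb.1, fun C hC => ?_⟩
  set Ŝ : Vo l := ⟨_, ordCode_mem_Vo (T := {b | b < κ ∧ b.toZFSet ∈ x}) hj.lt⟩
  set Ĉ : Vo l := ⟨_, ordCode_mem_Vo (T := C) hj.lt⟩
  have hguess : ExistsGuess (j Ĉ) (j Â) (j Ŝ) (j K) := by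
    refine ⟨_, hj.toZFSet_mem_map_self hM, hj.toZFSet_mem_map_ordCode hM hC, x, hx, hmax,
      fun z hz => ?_⟩
    obtain ⟨b, hb, rfl⟩ := mem_toZFSet_iff.1 hz
    rw [hj.toZFSet_mem_map_iff hM hb, toZFSet_mem_ordCode]
    simp [hb]
  exact nonempty_inter_of_existsGuess hA
    ((expresses_guessFm.map_iff j hM ![Ĉ, Â, Ŝ, K]).1 hguess)

end IsCritical

theorem isStationaryIn_succ {T : Set Ordinal} {a : Ordinal} (ha : a ∈ T) :
    IsStationaryIn T (succ a) := by
  intro C hC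
  obtain ⟨b, hbC, hab, hb⟩ := hC.1 a (lt_succ a)
  obtain rfl := (lt_succ_iff.1 hb).antisymm hab
  exact ⟨b, ha, hbC⟩

/-- If `κ` is a cardinal such that for every `f : κ → κ` there are `λ > κ`, a transitive
set `M` with `V_λ ⊆ M` and an elementary embedding `j : V_λ → M` with critical point `κ`
(here assumed to exist in `V`), then `κ` is ineffable: for every sequence
`⟨A_α : α < κ⟩` with `A_α ⊆ α` there is `A ⊆ κ` with `{α : A ∩ α = A_α}` stationary. -/
theorem stmt_4 (κ : Cardinal)
    (H : ∀ f : Ordinal → Ordinal, (∀ a < κ.ord, f a < κ.ord) →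
      ∃ (l : Ordinal) (M : ZFSet), κ.ord < l ∧ M.IsTransitive ∧
        (∀ x : ZFSet, x.rank < l → x ∈ M) ∧
        ∃ j : (Vo l) ↪ₑ[memLang] (M.toSet),
          (∀ (o : ZFSet) (ho : o ∈ Vo l), o.IsOrdinal → o.rank < κ.ord →
            ((j ⟨o, ho⟩ : M.toSet) : ZFSet) = o) ∧
          (∃ (o : ZFSet) (ho : o ∈ Vo l), o.IsOrdinal ∧ o.rank = κ.ord ∧
            ((j ⟨o, ho⟩ : M.toSet) : ZFSet) ≠ o))
    (A : Ordinal → Set Ordinal) (hA : ∀ a < κ.ord, A a ⊆ Set.Iio a) :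
    ∃ S ⊆ Set.Iio κ.ord,
      IsStationaryIn {a : Ordinal | a < κ.ord ∧ S ∩ Set.Iio a = A a} κ.ord := by
  obtain ⟨l, M, hl, hM, -, j, hfix, o, ho, hoOrd, horank, hmove⟩ := H id fun a ha => ha
  obtain rfl : o = κ.ord.toZFSet := by rw [← horank, hoOrd.toZFSet_rank_eq]
  have hj : IsCritical j κ.ord :=
    ⟨hl, fun b hb _ => hfix _ _ (isOrdinal_toZFSet b) ((rank_toZFSet b).trans_lt hb), hmove⟩
  rcases zero_or_succ_or_isSuccLimit κ.ord with h | ⟨a, ha⟩ | h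
  · exact absurd h (hj.ne_zero hM)
  · rw [← ha] at hA ⊢
    have hAa := hA a (lt_succ a)
    exact ⟨A a, hAa.trans (Set.Iio_subset_Iio (le_succ a)),
      isStationaryIn_succ ⟨lt_succ a, Set.inter_eq_left.2 hAa⟩⟩
  · exact hj.exists_isStationaryIn hM h hA
end

section
/- Let λ ≥ ω₁ be an ordinal and g : λ^{<ω} → λ a function. The set of reals { x ∈ ω^ω : the structure (ω, E_x) is isomorphic to (σ, ∈) for some g-closed countable subset σ of λ } is the projection onto the first coordinate of a closed subset of ω^ω × λ^ω × ω^ω, namely the set of triples (x, h, y) such that h is an embedding of (ω, E_x) into (λ, ∈) and for all n < ω, g[ { h(i) : i < n }^{<n} ] ⊆ { h(i) : i < y(n) }. Here E_x is the binary relation on ω defined by (m,n) ∈ E_x iff x(⟨m,n⟩) = 0 for a fixed recursive pairing ⟨·,·⟩. -/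
/-- The binary relation on `ω` coded by a real: `E_x(m,n) ↔ x(⟨m,n⟩) = 0`. -/
def Ex (x : ℕ → ℕ) (m n : ℕ) : Prop := x (Nat.pair m n) = 0

/-- `σ` is `g`-closed: `g[σ^{<ω}] ⊆ σ`. -/
def GClosed {l : Ordinal} (g : List ↥(Set.Iio l) → ↥(Set.Iio l))
    (σ : Set ↥(Set.Iio l)) : Prop :=
  ∀ lst : List ↥(Set.Iio l), (∀ a ∈ lst, a ∈ σ) → g lst ∈ σ

/-- The set of triples `(x, h, y)` such that `h` is an embedding of `(ω, E_x)` into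
`(λ, ∈)` and `y` witnesses the lookahead: for all `n`,
`g[{h i : i < n}^{<n}] ⊆ {h i : i < y n}`. -/
def tripleSet (l : Ordinal) (g : List ↥(Set.Iio l) → ↥(Set.Iio l)) :
    Set ((ℕ → ℕ) × (ℕ → ↥(Set.Iio l)) × (ℕ → ℕ)) :=
  {p | Function.Injective p.2.1 ∧
    (∀ m n : ℕ, Ex p.1 m n ↔ p.2.1 m < p.2.1 n) ∧
    (∀ n : ℕ, ∀ lst : List ↥(Set.Iio l), lst.length < n →
      (∀ a ∈ lst, a ∈ (List.range n).map p.2.1) →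
      g lst ∈ (List.range (p.2.2 n)).map p.2.1)}

/-!
Closedness: each clause of `tripleSet` is decided by finitely many coordinates of the triple —
for the lookahead clause at `n`, once `y n = k` is fixed, by `h` below `max n k` — so it cuts out
a clopen set of the discrete product.

Projection: `range h` is `g`-closed iff every `n` admits a lookahead bound `k`. Indeed, there are
only finitely many lists of length `< n` over `{h i | i < n}`, so when `range h` is `g`-closed
their `g`-values are finitely many points of `range h`, all listed before some index `k`;
conversely every finite list from `range h` already lies in some `{h i | i < n}` with `n`
exceeding its length.
-/

open Filter Function Set

theorem DependsOn.isLocallyConstant {ι : Type*} {X : ι → Type*} [∀ i, TopologicalSpace (X i)]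
    [∀ i, DiscreteTopology (X i)] {β : Type*} {f : (Π i, X i) → β} {s : Set ι}
    (hf : DependsOn f s) (hs : s.Finite) : IsLocallyConstant f :=
  (IsLocallyConstant.iff_exists_open f).2 fun x =>
    ⟨s.pi fun i => {x i}, isOpen_set_pi hs fun _ _ => isOpen_discrete _,
      fun _ _ => rfl, fun _ hy => hf fun i hi => hy i hi⟩

theorem isClosed_setOf_injective {ι D : Type*} [TopologicalSpace D] [DiscreteTopology D] :
    IsClosed {f : ι → D | Injective f} := by
  simp only [Injective, ofPred_forall]
  exact isClosed_iInter fun m => isClosed_iInter fun n =>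
    (isClosed_discrete {q : D × D | q.1 = q.2 → m = n}).preimage
      (by fun_prop : Continuous fun f : ι → D => (f m, f n))

theorem List.finite_setOf_length_lt_forall_mem {α : Type*} {t : Set α} (ht : t.Finite) (n : ℕ) :
    {l : List α | l.length < n ∧ ∀ a ∈ l, a ∈ t}.Finite := by
  have := ht.to_subtype
  refine ((List.finite_length_lt t n).image (List.map (↑))).subset ?_
  rintro l ⟨hlen, hmem⟩
  lift l to List t using hmem
  exact ⟨l, by simpa using hlen, rfl⟩

theorem eventually_forall_mem_map_range {D : Type*} {h : ℕ → D} {s : Set D} (hs : s.Finite)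
    (hsub : s ⊆ range h) : ∀ᶠ k in atTop, ∀ a ∈ s, a ∈ (List.range k).map h :=
  hs.eventually_all.2 fun a ha => by
    obtain ⟨i, rfl⟩ := hsub ha
    exact (eventually_gt_atTop i).mono fun k hk => List.mem_map.2 ⟨i, List.mem_range.2 hk, rfl⟩

section Lookahead

variable {D : Type*} (g : List D → D)

/-- `g[{h i | i < n}^{<n}] ⊆ {h i | i < k}`. -/
def IsLookahead (h : ℕ → D) (n k : ℕ) : Prop :=
  ∀ lst : List D, lst.length < n → (∀ a ∈ lst, a ∈ (List.range n).map h) →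
    g lst ∈ (List.range k).map h

theorem dependsOn_isLookahead (n k : ℕ) :
    DependsOn (fun h => IsLookahead g h n k) (Iio (max n k)) := by
  intro h h' hhh'
  have hmap : ∀ m ≤ max n k, (List.range m).map h = (List.range m).map h' := fun m hm =>
    List.map_congr_left fun i hi => hhh' i (lt_of_lt_of_le (List.mem_range.1 hi) hm)
  simp only [IsLookahead, hmap n (le_max_left n k), hmap k (le_max_right n k)]

theorem forall_exists_isLookahead_iff {h : ℕ → D} :
    (∀ n, ∃ k, IsLookahead g h n k) ↔
      ∀ lst : List D, (∀ a ∈ lst, a ∈ range h) → g lst ∈ range h := by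
  constructor
  · intro hlook lst hlst
    obtain ⟨n, hn, hsub⟩ := ((eventually_gt_atTop lst.length).and
      (eventually_forall_mem_map_range lst.finite_toSet hlst)).exists
    obtain ⟨k, hk⟩ := hlook n
    obtain ⟨i, -, hi⟩ := List.mem_map.1 (hk lst hn hsub)
    exact ⟨i, hi⟩
  · intro hclosed n
    let L := {lst : List D | lst.length < n ∧ ∀ a ∈ lst, a ∈ (List.range n).map h}
    have hfin : (g '' L).Finite :=
      (List.finite_setOf_length_lt_forall_mem (List.finite_toSet _) n).image g
    have hsub : g '' L ⊆ range h := by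
      rintro _ ⟨lst, ⟨-, hmem⟩, rfl⟩
      exact hclosed lst fun a ha => (List.mem_map.1 (hmem a ha)).imp fun _ hi => hi.2
    obtain ⟨k, hk⟩ := (eventually_forall_mem_map_range hfin hsub).exists
    exact ⟨k, fun lst hlen hmem => hk _ ⟨lst, ⟨hlen, hmem⟩, rfl⟩⟩

theorem isClosed_setOf_forall_isLookahead [TopologicalSpace D] [DiscreteTopology D] :
    IsClosed {q : (ℕ → D) × (ℕ → ℕ) | ∀ n, IsLookahead g q.1 n (q.2 n)} := by
  have : {q : (ℕ → D) × (ℕ → ℕ) | ∀ n, IsLookahead g q.1 n (q.2 n)} =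
      ⋂ n, ⋂ k, {q | q.2 n = k → IsLookahead g q.1 n k} := by
    ext q
    simp [forall_eq']
  rw [this]
  exact isClosed_iInter fun n => isClosed_iInter fun k =>
    isClosed_imp ((isOpen_discrete {k}).preimage (by fun_prop))
      (by simpa using (((dependsOn_isLookahead g n k).isLocallyConstant
        (finite_Iio _)).isClosed_fiber True).preimage continuous_fst)

end Lookahead

theorem isClosed_tripleSet (l : Ordinal) [TopologicalSpace ↥(Iio l)] [DiscreteTopology ↥(Iio l)]
    (g : List ↥(Iio l) → ↥(Iio l)) : IsClosed (tripleSet l g) := by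
  have hEx : IsClosed {p : (ℕ → ℕ) × (ℕ → ↥(Iio l)) × (ℕ → ℕ) |
      ∀ m n, Ex p.1 m n ↔ p.2.1 m < p.2.1 n} := by
    simp only [ofPred_forall]
    exact isClosed_iInter fun m => isClosed_iInter fun n =>
      (isClosed_discrete {q : ℕ × ↥(Iio l) × ↥(Iio l) | q.1 = 0 ↔ q.2.1 < q.2.2}).preimage
        (by fun_prop : Continuous fun p : (ℕ → ℕ) × (ℕ → ↥(Iio l)) × (ℕ → ℕ) =>
          (p.1 (Nat.pair m n), p.2.1 m, p.2.1 n))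
  exact (isClosed_setOf_injective.preimage (by fun_prop)).inter
    (hEx.inter ((isClosed_setOf_forall_isLookahead g).preimage continuous_snd))

theorem image_fst_tripleSet (l : Ordinal) (g : List ↥(Iio l) → ↥(Iio l)) :
    (fun p => p.1) '' tripleSet l g =
      {x : ℕ → ℕ | ∃ σ : Set ↥(Iio l), σ.Countable ∧ GClosed g σ ∧
        ∃ e : ℕ → ↥(Iio l), Injective e ∧ range e = σ ∧ ∀ m n : ℕ, Ex x m n ↔ e m < e n} := by
  ext x
  constructor
  · rintro ⟨⟨_, h, y⟩, ⟨hinj, hEx, hlook⟩, rfl⟩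
    exact ⟨range h, countable_range h,
      (forall_exists_isLookahead_iff g).1 fun n => ⟨y n, hlook n⟩, h, hinj, rfl, hEx⟩
  · rintro ⟨σ, -, hσ, e, hinj, rfl, hEx⟩
    choose y hy using (forall_exists_isLookahead_iff g).2 hσ
    exact ⟨(x, e, y), ⟨hinj, hEx, hy⟩, rfl⟩

theorem stmt_10_general (l : Ordinal)
    [TopologicalSpace ↥(Set.Iio l)] [DiscreteTopology ↥(Set.Iio l)]
    (g : List ↥(Set.Iio l) → ↥(Set.Iio l)) :
    IsClosed (tripleSet l g) ∧
    (fun p => p.1) '' tripleSet l g =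
      {x : ℕ → ℕ | ∃ σ : Set ↥(Set.Iio l), σ.Countable ∧ GClosed g σ ∧
        ∃ e : ℕ → ↥(Set.Iio l), Function.Injective e ∧ Set.range e = σ ∧
          ∀ m n : ℕ, Ex x m n ↔ e m < e n} :=
  ⟨isClosed_tripleSet l g, image_fst_tripleSet l g⟩

/-- With `λ` discrete, the set of reals coding structures `(ω, E_x)` isomorphic to
`(σ, ∈)` for some `g`-closed countable `σ ⊆ λ` is the projection onto the first
coordinate of the closed set `tripleSet l g ⊆ ω^ω × λ^ω × ω^ω`. -/
theorem stmt_10 (l : Ordinal) (hl : (Cardinal.aleph 1).ord ≤ l)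
    [TopologicalSpace ↥(Set.Iio l)] [DiscreteTopology ↥(Set.Iio l)]
    (g : List ↥(Set.Iio l) → ↥(Set.Iio l)) :
    IsClosed (tripleSet l g) ∧
    (fun p => p.1) '' tripleSet l g =
      {x : ℕ → ℕ | ∃ σ : Set ↥(Set.Iio l), σ.Countable ∧ GClosed g σ ∧
        ∃ e : ℕ → ↥(Set.Iio l), Function.Injective e ∧ Set.range e = σ ∧
          ∀ m n : ℕ, Ex x m n ↔ e m < e n} :=
  stmt_10_general l g
end

section
/- Let f : ω₁ → ω₁ be strictly increasing, let λ ≥ ω₁, and let g : λ^{<ω} → λ be a function such that every g-closed countable σ ⊆ λ satisfies: σ ∩ ω₁ is an ordinal, otp(σ) < f(σ ∩ ω₁), and σ ∩ ω₁ is closed under f. Then for every g-closed countable σ ⊆ λ, the order type of σ is not in the range of f. -/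
/-! If `otp σ = f b`, apply the hypothesis to `σ` to get `d = σ ∩ ω₁`. Then `f b = otp σ < f d`
gives `b < d`, so `f b < d` by closure of `d` under `f`; but `Iio d ⊆ σ` gives `d ≤ otp σ = f b`. -/

/-- The first uncountable ordinal `ω₁`. -/
noncomputable def omega1 : Ordinal := (Cardinal.aleph 1).ord

/-- The order type of a set of ordinals (under `∈`, i.e. `<`). -/
noncomputable def otp (s : Set Ordinal.{0}) : Ordinal.{1} :=
  letI : IsWellOrder s (Subrel (· < ·) (· ∈ s)) :=
    RelEmbedding.isWellOrder (Subrel.relEmbedding (· < ·) (· ∈ s))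
  Ordinal.type (Subrel (· < ·) (· ∈ s))

lemma otp_mono {s t : Set Ordinal.{0}} (h : s ⊆ t) : otp s ≤ otp t := by
  let : IsWellOrder s (Subrel (· < ·) (· ∈ s)) :=
    RelEmbedding.isWellOrder (Subrel.relEmbedding (· < ·) (· ∈ s))
  let : IsWellOrder t (Subrel (· < ·) (· ∈ t)) :=
    RelEmbedding.isWellOrder (Subrel.relEmbedding (· < ·) (· ∈ t))
  exact Ordinal.type_le_iff'.2 ⟨⟨⟨Set.inclusion h, Set.inclusion_injective h⟩, Iff.rfl⟩⟩

lemma otp_Iio (a : Ordinal.{0}) : otp (Set.Iio a) = Ordinal.lift.{1} a :=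
  (Ordinal.type_subrel LT.lt a).trans (Ordinal.typein_ordinal a)

lemma lift_le_otp_of_Iio_subset {a : Ordinal.{0}} {s : Set Ordinal.{0}} (h : Set.Iio a ⊆ s) :
    Ordinal.lift.{1} a ≤ otp s :=
  otp_Iio a ▸ otp_mono h

theorem stmt_11_general (f : Ordinal → Ordinal)
    (hf2 : StrictMonoOn f (Set.Iio omega1))
    (l : Ordinal)
    (g : List Ordinal → Ordinal)
    (H : ∀ σ : Set Ordinal, σ ⊆ Set.Iio l → σ.Countable →
      (∀ lst : List Ordinal, (∀ o ∈ lst, o ∈ σ) → g lst ∈ σ) →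
      ∃ d < omega1, σ ∩ Set.Iio omega1 = Set.Iio d ∧
        otp σ < Ordinal.lift.{1} (f d) ∧ ∀ b < d, f b < d)
    (σ : Set Ordinal) (hσ1 : σ ⊆ Set.Iio l) (hσ2 : σ.Countable)
    (hσ3 : ∀ lst : List Ordinal, (∀ o ∈ lst, o ∈ σ) → g lst ∈ σ) :
    ∀ b < omega1, otp σ ≠ Ordinal.lift.{1} (f b) := by
  intro b hb hσb
  obtain ⟨d, hd, hσd, hσ_lt, hd_closed⟩ := H σ hσ1 hσ2 hσ3
  have hbd : b < d := (hf2.lt_iff_lt hb hd).1 (Ordinal.lift_lt.1 (hσb ▸ hσ_lt))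
  have hd_le : Ordinal.lift.{1} d ≤ otp σ :=
    lift_le_otp_of_Iio_subset (hσd ▸ Set.inter_subset_left)
  exact (hd_closed b hbd).not_ge (Ordinal.lift_le.1 (hσb ▸ hd_le))

/-- If `f : ω₁ → ω₁` is strictly increasing and `g : λ^{<ω} → λ` is such that every
`g`-closed countable `σ ⊆ λ` satisfies: `σ ∩ ω₁` is an ordinal `d < ω₁`,
`otp(σ) < f(d)`, and `d` is closed under `f`, then the order type of every `g`-closed
countable `σ ⊆ λ` is not in the range of `f`. -/
theorem stmt_11 (f : Ordinal → Ordinal)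
    (hf1 : ∀ a < omega1, f a < omega1) (hf2 : StrictMonoOn f (Set.Iio omega1))
    (l : Ordinal) (hl : omega1 ≤ l)
    (g : List Ordinal → Ordinal)
    (hg : ∀ lst : List Ordinal, (∀ o ∈ lst, o < l) → g lst < l)
    (H : ∀ σ : Set Ordinal, σ ⊆ Set.Iio l → σ.Countable →
      (∀ lst : List Ordinal, (∀ o ∈ lst, o ∈ σ) → g lst ∈ σ) →
      ∃ d < omega1, σ ∩ Set.Iio omega1 = Set.Iio d ∧
        otp σ < Ordinal.lift.{1} (f d) ∧ ∀ b < d, f b < d)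
    (σ : Set Ordinal) (hσ1 : σ ⊆ Set.Iio l) (hσ2 : σ.Countable)
    (hσ3 : ∀ lst : List Ordinal, (∀ o ∈ lst, o ∈ σ) → g lst ∈ σ) :
    ∀ b < omega1, otp σ ≠ Ordinal.lift.{1} (f b) :=
  stmt_11_general f hf2 l g H σ hσ1 hσ2 hσ3
end
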